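/- In the model M2, for every formula φ of the language Φ (with single propositional variable p and single name Ann) that does not use the modality R, the truth set [φ] belongs to the family {[p], [⊥], [¬p], [⊤]}. -/

import Mathlib

/-- Formulas of the language Φ: φ ::= p | ¬φ | φ∨φ | @ₙφ | Rₙφ | Dₙφ,
where `P` is the type of propositional variables and `N` the type of names. -/
inductive Formula (P N : Type) : Type
  | var : P → Formula P N
  | neg : Formula P N → Formula P N
  | disj : Formula P N → Formula P N → Formula P N
  | at_ : N → Formula P N → Formula P N
  | re : N → Formula P N → Formula P N
  | de : N → Formula P N → Formula P N

/-- An epistemic model with extensions. -/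
structure Model (P N : Type) where
  W : Type
  A : Type
  sim : A → W → W → Prop
  sim_equiv : ∀ a, Equivalence (sim a)
  ext : W → N → A
  val : P → Set (W × A)

/-- The satisfaction relation `w, a ⊨ φ`. -/
def Model.sat {P N : Type} (M : Model P N) : Formula P N → M.W → M.A → Prop
  | .var p, w, a => (w, a) ∈ M.val p
  | .neg φ, w, a => ¬ M.sat φ w a
  | .disj φ ψ, w, a => M.sat φ w a ∨ M.sat ψ w a
  | .at_ n φ, w, _ => M.sat φ w (M.ext w n)
  | .re n φ, w, a => ∀ u, M.sim a w u → M.sat φ u (M.ext w n)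
  | .de n φ, w, a => ∀ u, M.sim a w u → M.sat φ u (M.ext u n)

/-- The truth set ⟦φ⟧ of a formula. -/
def Model.truthSet {P N : Type} (M : Model P N) (φ : Formula P N) : Set (M.W × M.A) :=
  {x | M.sat φ x.1 x.2}

/-- The model M2: worlds w=0, u=1; agents a=0, b=1; agent a cannot
distinguish the worlds, agent b can; Ann refers to a in w and b in u;
π(p) = {(w,a),(u,b)}. -/
def M2 : Model Unit Unit where
  W := Fin 2
  A := Fin 2
  sim := fun x s t => x = 0 ∨ s = t
  sim_equiv := fun x =>
    ⟨fun _ => Or.inr rfl, fun h => h.imp id Eq.symm,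
     fun h₁ h₂ => by rcases h₁ with h | h <;> rcases h₂ with h' | h' <;> simp_all⟩
  ext := fun w _ => w
  val := fun _ => {((0 : Fin 2), (0 : Fin 2)), (1, 1)}

/-- The family of truth sets {⟦p⟧, ⟦⊥⟧, ⟦¬p⟧, ⟦⊤⟧} in M2 (⟦⊥⟧ = ∅, ⟦⊤⟧ = W×A). -/
def Fam2 : Set (Set (M2.W × M2.A)) :=
  {M2.truthSet (.var ()), ∅, M2.truthSet (.neg (.var ())), Set.univ}

/-- A formula does not use the modality R. -/
def Formula.noRe {P N : Type} : Formula P N → Prop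
  | .var _ => True
  | .neg φ => φ.noRe
  | .disj φ ψ => φ.noRe ∧ ψ.noRe
  | .at_ _ φ => φ.noRe
  | .re _ _ => False
  | .de _ φ => φ.noRe

/-!
In M2 the name Ann always denotes the agent whose index is the current world, and π(p) is the
diagonal, so every point (u, e_u(Ann)) consulted by `@_Ann` or `D_Ann` lies in ⟦p⟧. Hence on the
Boolean algebra {⟦p⟧, ∅, ⟦p⟧ᶜ, W×A} generated by ⟦p⟧, whose members each contain ⟦p⟧ or miss it,
both modalities take only the values ∅ and W×A. That algebra is thus closed under every connective
except R, and induction on formulas finishes the proof.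
-/

open Set

def genBoolAlg {α : Type*} (S : Set α) : Set (Set α) :=
  {S, ∅, Sᶜ, univ}

section genBoolAlg

variable {α : Type*} {S T T' : Set α}

theorem empty_mem_genBoolAlg : ∅ ∈ genBoolAlg S := by simp [genBoolAlg]

theorem univ_mem_genBoolAlg : univ ∈ genBoolAlg S := by simp [genBoolAlg]

theorem compl_mem_genBoolAlg (hT : T ∈ genBoolAlg S) : Tᶜ ∈ genBoolAlg S := by
  rcases hT with rfl | rfl | rfl | rfl <;> simp [genBoolAlg]

theorem union_mem_genBoolAlg (hT : T ∈ genBoolAlg S) (hT' : T' ∈ genBoolAlg S) :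
    T ∪ T' ∈ genBoolAlg S := by
  rcases hT with rfl | rfl | rfl | rfl <;> rcases hT' with rfl | rfl | rfl | rfl <;>
    simp [genBoolAlg]

theorem subset_or_disjoint_of_mem_genBoolAlg (hT : T ∈ genBoolAlg S) :
    S ⊆ T ∨ Disjoint S T := by
  rcases hT with rfl | rfl | rfl | rfl <;> simp [disjoint_compl_right]

end genBoolAlg

namespace Model

variable {P N : Type} (M : Model P N)

/-- `⟦@ₙ φ⟧ = atSet n ⟦φ⟧`. -/
def atSet (n : N) (T : Set (M.W × M.A)) : Set (M.W × M.A) :=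
  {x | (x.1, M.ext x.1 n) ∈ T}

/-- `⟦Dₙ φ⟧ = deSet n ⟦φ⟧`. -/
def deSet (n : N) (T : Set (M.W × M.A)) : Set (M.W × M.A) :=
  {x | ∀ u, M.sim x.2 x.1 u → (u, M.ext u n) ∈ T}

variable {M} {n : N} {T : Set (M.W × M.A)}

theorem atSet_eq_univ (hT : ∀ w, (w, M.ext w n) ∈ T) : M.atSet n T = univ :=
  eq_univ_of_forall fun x => hT x.1

theorem atSet_eq_empty (hT : ∀ w, (w, M.ext w n) ∉ T) : M.atSet n T = ∅ :=
  eq_empty_of_forall_notMem fun x => hT x.1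

theorem deSet_eq_univ (hT : ∀ w, (w, M.ext w n) ∈ T) : M.deSet n T = univ :=
  eq_univ_of_forall fun _ u _ => hT u

theorem deSet_eq_empty (hT : ∀ w, (w, M.ext w n) ∉ T) : M.deSet n T = ∅ :=
  eq_empty_of_forall_notMem fun x hx => hT x.1 (hx x.1 ((M.sim_equiv x.2).refl x.1))

theorem truthSet_mem_of_closed {F : Set (Set (M.W × M.A))}
    (hvar : ∀ p, M.truthSet (.var p) ∈ F) (hcompl : ∀ T ∈ F, Tᶜ ∈ F)
    (hunion : ∀ T ∈ F, ∀ T' ∈ F, T ∪ T' ∈ F) (hat : ∀ n, ∀ T ∈ F, M.atSet n T ∈ F)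
    (hde : ∀ n, ∀ T ∈ F, M.deSet n T ∈ F) :
    ∀ φ : Formula P N, φ.noRe → M.truthSet φ ∈ F
  | .var p, _ => hvar p
  | .neg φ, h => hcompl _ (truthSet_mem_of_closed hvar hcompl hunion hat hde φ h)
  | .disj φ ψ, h => hunion _ (truthSet_mem_of_closed hvar hcompl hunion hat hde φ h.1)
      _ (truthSet_mem_of_closed hvar hcompl hunion hat hde ψ h.2)
  | .at_ n φ, h => hat n _ (truthSet_mem_of_closed hvar hcompl hunion hat hde φ h)
  | .de n φ, h => hde n _ (truthSet_mem_of_closed hvar hcompl hunion hat hde φ h)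

variable {S : Set (M.W × M.A)}

theorem forall_ext_mem_or_forall_ext_notMem (hnamed : ∀ w n, (w, M.ext w n) ∈ S)
    (hT : T ∈ genBoolAlg S) :
    (∀ w, (w, M.ext w n) ∈ T) ∨ ∀ w, (w, M.ext w n) ∉ T :=
  (subset_or_disjoint_of_mem_genBoolAlg hT).imp (fun hST w => hST (hnamed w n))
    (fun hST w => hST.notMem_of_mem_left (hnamed w n))

theorem atSet_mem_genBoolAlg (hnamed : ∀ w n, (w, M.ext w n) ∈ S) (hT : T ∈ genBoolAlg S) :
    M.atSet n T ∈ genBoolAlg S := by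
  rcases forall_ext_mem_or_forall_ext_notMem hnamed hT with h | h
  · exact atSet_eq_univ h ▸ univ_mem_genBoolAlg
  · exact atSet_eq_empty h ▸ empty_mem_genBoolAlg

theorem deSet_mem_genBoolAlg (hnamed : ∀ w n, (w, M.ext w n) ∈ S) (hT : T ∈ genBoolAlg S) :
    M.deSet n T ∈ genBoolAlg S := by
  rcases forall_ext_mem_or_forall_ext_notMem hnamed hT with h | h
  · exact deSet_eq_univ h ▸ univ_mem_genBoolAlg
  · exact deSet_eq_empty h ▸ empty_mem_genBoolAlg

theorem truthSet_mem_genBoolAlg (hvar : ∀ p, M.truthSet (.var p) = S)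
    (hnamed : ∀ w n, (w, M.ext w n) ∈ S) {φ : Formula P N} (hφ : φ.noRe) :
    M.truthSet φ ∈ genBoolAlg S :=
  truthSet_mem_of_closed (fun p => (hvar p).symm ▸ mem_insert S _)
    (fun _ => compl_mem_genBoolAlg) (fun _ hT _ hT' => union_mem_genBoolAlg hT hT')
    (fun _ _ => atSet_mem_genBoolAlg hnamed) (fun _ _ => deSet_mem_genBoolAlg hnamed) φ hφ

end Model

theorem M2_ext_mem_truthSet_var (w : M2.W) (n : Unit) :
    (w, M2.ext w n) ∈ M2.truthSet (.var ()) := by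
  revert w
  change ∀ w : Fin 2, (w, w) ∈ ({(0, 0), (1, 1)} : Set (Fin 2 × Fin 2))
  intro w
  fin_cases w <;> simp

/-- In M2, for every formula φ not using the modality R,
⟦φ⟧ ∈ {⟦p⟧, ⟦⊥⟧, ⟦¬p⟧, ⟦⊤⟧}. -/
theorem noRe_truthSet_in_Fam2 (φ : Formula Unit Unit) (h : φ.noRe) :
    M2.truthSet φ ∈ Fam2 :=
  M2.truthSet_mem_genBoolAlg (fun _ => rfl) M2_ext_mem_truthSet_var h
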